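/- Let B be a skew-symmetrizable n×n integer matrix, let t be a vertex reached from the initial vertex t_0 by a path, and let t' be obtained from t by one further mutation in direction ℓ. Assume the ℓ-th columns of C^{B;t_0}_t and of C^{−B;t_0}_t are each sign-coherent (nonzero with all entries of the same sign), with column signs ε_{•ℓ}(C^{B;t_0}_t) and ε_{•ℓ}(C^{−B;t_0}_t). Then F^{B;t_0}_{t'} = F^{B;t_0}_t (J_ℓ + [ε_{•ℓ}(C^{−B;t_0}_t) B_t]^{•ℓ}_+) + [ε_{•ℓ}(C^{−B;t_0}_t) C^{B;t_0}_t]^{•ℓ}_+ and also F^{B;t_0}_{t'} = F^{B;t_0}_t (J_ℓ + [−ε_{•ℓ}(C^{B;t_0}_t) B_t]^{•ℓ}_+) + [ε_{•ℓ}(C^{B;t_0}_t) C^{−B;t_0}_t]^{•ℓ}_+. -/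

import Mathlib

open Matrix

section Defs

variable {ι : Type} [Fintype ι] [DecidableEq ι]
variable {R : Type} [CommRing R] [LinearOrder R] [IsStrictOrderedRing R]

/-- Entrywise positive part `[A]₊`. -/
def matPos (A : Matrix ι ι R) : Matrix ι ι R := fun i j => max (A i j) 0

/-- `A^{k•}`: the matrix keeping only the `k`-th row of `A`. -/
def rowSel (k : ι) (A : Matrix ι ι R) : Matrix ι ι R := fun i j => if i = k then A i j else 0

/-- `A^{•k}`: the matrix keeping only the `k`-th column of `A`. -/
def colSel (k : ι) (A : Matrix ι ι R) : Matrix ι ι R := fun i j => if j = k then A i j else 0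

/-- Entrywise maximum of two matrices. -/
def emax (A B : Matrix ι ι R) : Matrix ι ι R := fun i j => max (A i j) (B i j)

/-- `J_ℓ`: identity matrix with `(ℓ,ℓ)` entry replaced by `-1`. -/
def Jmat (ℓ : ι) : Matrix ι ι R := Matrix.diagonal fun i => if i = ℓ then -1 else 1

/-- Matrix mutation `μ_k(B)` in direction `k`. -/
def mutate (B : Matrix ι ι R) (k : ι) : Matrix ι ι R := fun i j =>
  if i = k ∨ j = k then -(B i j)
  else B i j + max (B i k) 0 * B k j + B i k * max (-(B k j)) 0

/-- The data `(B_t, C_t, G_t, F_t)` attached to a vertex. -/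
structure SeedData (ι R : Type) where
  B : Matrix ι ι R
  C : Matrix ι ι R
  G : Matrix ι ι R
  F : Matrix ι ι R

/-- One final-seed mutation step in direction `ℓ` (with initial exchange matrix `B0`). -/
def seedStep (B0 : Matrix ι ι R) (s : SeedData ι R) (ℓ : ι) : SeedData ι R where
  B := mutate s.B ℓ
  C := s.C * (Jmat ℓ + rowSel ℓ (matPos s.B)) + colSel ℓ (matPos (-s.C)) * s.B
  G := s.G * (Jmat ℓ + colSel ℓ (matPos s.B)) - B0 * colSel ℓ (matPos s.C)
  F := s.F * Jmat ℓ + emax (colSel ℓ (matPos s.C) + s.F * colSel ℓ (matPos s.B))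
      (colSel ℓ (matPos (-s.C)) + s.F * colSel ℓ (matPos (-s.B)))

/-- The seed data at the endpoint of the path `p` starting from the initial vertex. -/
def seedOf (B0 : Matrix ι ι R) (p : List ι) : SeedData ι R :=
  p.foldl (seedStep B0) ⟨B0, 1, 1, 0⟩

/-- The exchange matrix `B_t` at the end of the path `p`. -/
def Bpath (B : Matrix ι ι R) (p : List ι) : Matrix ι ι R := (seedOf B p).B

/-- The `C`-matrix `C^{B;t_0}_t` at the end of the path `p`. -/
def Cmat (B : Matrix ι ι R) (p : List ι) : Matrix ι ι R := (seedOf B p).C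

/-- The `G`-matrix `G^{B;t_0}_t` at the end of the path `p`. -/
def Gmat (B : Matrix ι ι R) (p : List ι) : Matrix ι ι R := (seedOf B p).G

/-- The `F`-matrix `F^{B;t_0}_t` at the end of the path `p`. -/
def Fmat (B : Matrix ι ι R) (p : List ι) : Matrix ι ι R := (seedOf B p).F

/-- `B` is skew-symmetrizable: `DB` is skew-symmetric for some positive diagonal `D`. -/
def IsSkewSymmetrizable (B : Matrix ι ι ℤ) : Prop :=
  ∃ d : ι → ℤ, (∀ i, 0 < d i) ∧ (Matrix.diagonal d * B)ᵀ = -(Matrix.diagonal d * B)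

/-- Column sign-coherence: every column is nonzero and has all entries of one sign. -/
def ColSignCoherent (A : Matrix ι ι ℤ) : Prop :=
  ∀ j, (∃ i, A i j ≠ 0) ∧ ((∀ i, 0 ≤ A i j) ∨ (∀ i, A i j ≤ 0))

/-- Row sign-coherence: every row is nonzero and has all entries of one sign. -/
def RowSignCoherent (A : Matrix ι ι ℤ) : Prop :=
  ∀ i, (∃ j, A i j ≠ 0) ∧ ((∀ j, 0 ≤ A i j) ∨ (∀ j, A i j ≤ 0))

/-- `ε` is the column sign `ε_{•ℓ}(A)` of the (sign-coherent, nonzero) `ℓ`-th column of `A`. -/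
def IsColSign (ε : ℤ) (A : Matrix ι ι ℤ) (ℓ : ι) : Prop :=
  (ε = 1 ∨ ε = -1) ∧ (∃ i, A i ℓ ≠ 0) ∧ ∀ i, 0 ≤ ε * A i ℓ

/-- `ε` is the row sign `ε_{k•}(A)` of the (sign-coherent, nonzero) `k`-th row of `A`. -/
def IsRowSign (ε : ℤ) (A : Matrix ι ι ℤ) (k : ι) : Prop :=
  (ε = 1 ∨ ε = -1) ∧ (∃ j, A k j ≠ 0) ∧ ∀ j, 0 ≤ ε * A k j

/-- Sign-coherence of `C`-matrices: for every skew-symmetrizable initial integer matrix and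
every path, the associated `C`-matrix is column sign-coherent. -/
def SignCoherenceOfC : Prop :=
  ∀ (κ : Type) [Fintype κ] [DecidableEq κ], ∀ B : Matrix κ κ ℤ,
    IsSkewSymmetrizable B → ∀ p : List κ, ColSignCoherent (Cmat B p)

/-- The principal extension `B̄ = [[B, -I],[I, O]]` of `B`, on the index type `Fin n ⊕ Fin n`. -/
def pext {n : ℕ} (B : Matrix (Fin n) (Fin n) ℤ) :
    Matrix (Fin n ⊕ Fin n) (Fin n ⊕ Fin n) ℤ :=
  Matrix.fromBlocks B (-1) 1 0

noncomputable section FPolys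

/-- The ambient field of rational functions `ℚ(y_i : i ∈ ι)` (fraction field of `ℤ[y_i]`). -/
abbrev FField (ι : Type) := FractionRing (MvPolynomial ι ℤ)

/-- The variable `y_i` inside the fraction field. -/
def yvar (i : ι) : FField ι := algebraMap (MvPolynomial ι ℤ) (FField ι) (MvPolynomial.X i)

/-- One mutation step for the triple `(B_t, C_t, (F_{j;t})_j)`. -/
def fpolyStep (s : Matrix ι ι ℤ × Matrix ι ι ℤ × (ι → FField ι)) (ℓ : ι) :
    Matrix ι ι ℤ × Matrix ι ι ℤ × (ι → FField ι) :=
  ⟨mutate s.1 ℓ,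
   s.2.1 * (Jmat ℓ + rowSel ℓ (matPos s.1)) + colSel ℓ (matPos (-s.2.1)) * s.1,
   fun j => if j = ℓ then
     (s.2.2 ℓ)⁻¹ *
       ((∏ i, yvar i ^ (max (s.2.1 i ℓ) 0).toNat) * (∏ i, s.2.2 i ^ (max (s.1 i ℓ) 0).toNat)
        + (∏ i, yvar i ^ (max (-(s.2.1 i ℓ)) 0).toNat) *
            (∏ i, s.2.2 i ^ (max (-(s.1 i ℓ)) 0).toNat))
   else s.2.2 j⟩

/-- The `F`-polynomial `F^{B;t_0}_{j;t}` (as an element of the field of rational functions)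
at the end of the path `p`. -/
def Fpoly (B : Matrix ι ι ℤ) (p : List ι) : ι → FField ι :=
  (p.foldl fpolyStep ⟨B, 1, fun _ => 1⟩).2.2

/-- The polynomial representing an element of the fraction field (when it is a polynomial). -/
def polyOf (x : FField ι) : MvPolynomial ι ℤ := by
  classical exact
    if h : ∃ q : MvPolynomial ι ℤ, algebraMap (MvPolynomial ι ℤ) (FField ι) q = x then
      h.choose else 0

/-- The `H`-matrix `H^{B;t_0}_t`: `h_{ij;t}` is the minimum over exponent vectors `a` in the
support of `F^{B;t_0}_{j;t}` of `-a_i + ∑_{l ≠ i} [-b_{il}]₊ a_l`. -/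
def Hmat (B : Matrix ι ι ℤ) (p : List ι) : Matrix ι ι ℤ := fun i j =>
  if h : (polyOf (Fpoly B p j)).support.Nonempty then
    (polyOf (Fpoly B p j)).support.inf' h
      (fun a => -(a i : ℤ) + ∑ l ∈ Finset.univ.erase i, max (-(B i l)) 0 * (a l : ℤ))
  else 0

end FPolys

/-- The embedding `ℚ(y_1,…,y_n) → ℚ(y_1,…,y_{2n})` sending `y_i` to `y_i`
(the second batch of variables indexed by the right summand). -/
noncomputable def embK (n : ℕ) : FField (Fin n) →+* FField (Fin n ⊕ Fin n) :=
  IsFractionRing.lift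
    (g := (algebraMap (MvPolynomial (Fin n ⊕ Fin n) ℤ) (FField (Fin n ⊕ Fin n))).comp
      (MvPolynomial.rename (Sum.inl : Fin n → Fin n ⊕ Fin n)).toRingHom)
    (by
      intro a b hab
      simp only [RingHom.coe_comp, Function.comp_apply, AlgHom.toRingHom_eq_coe,
        RingHom.coe_coe] at hab
      exact MvPolynomial.rename_injective _ Sum.inl_injective
        (IsFractionRing.injective (MvPolynomial (Fin n ⊕ Fin n) ℤ)
          (FField (Fin n ⊕ Fin n)) hab))

/-- `D⁻¹ Cᵀ D` over `ℚ`, for the positive diagonal skew-symmetrizer `D = diagonal d`. -/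
noncomputable def dCd {n : ℕ} (d : Fin n → ℤ) (C : Matrix (Fin n) (Fin n) ℤ) :
    Matrix (Fin n) (Fin n) ℚ :=
  (Matrix.diagonal fun i => (d i : ℚ))⁻¹ * (C.map (Int.cast : ℤ → ℚ))ᵀ *
    Matrix.diagonal fun i => (d i : ℚ)

end Defs

/-! Since `max X Y = X + [Y - X]₊`, the `F`-matrix recursion linearizes to
`F_{t'} = F_t (J_ℓ + [B_t]^{•ℓ}₊) + [C_t]^{•ℓ}₊ + [-(C_t + F_t B_t)]^{•ℓ}₊`.
For skew-symmetrizable `B` (so that every `B_t` has zero diagonal) the matrix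
`C_t + F_t B_t` is `C^{-B;t_0}_t`: it satisfies the `C`-matrix recursion for `-B`
(whose exchange matrices are the `-B_t`), because
`μ_ℓ(B_t) = (J_ℓ + [B_t]^{•ℓ}₊) B_t (J_ℓ + [-B_t]^{ℓ•}₊)` and `(J_ℓ + [B_t]^{•ℓ}₊)² = 1`.
Once the `ℓ`-th column of `C^{-B;t_0}_t`, or of `C^{B;t_0}_t`, has a sign, one of the two
positive parts in the linearized recursion is either zero or linear, which gives the two
formulas. -/

section Selection

variable {ι : Type} [DecidableEq ι] {R : Type} [CommRing R]

@[simp] lemma colSel_apply (k : ι) (A : Matrix ι ι R) (i j : ι) :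
    colSel k A i j = if j = k then A i j else 0 := rfl

@[simp] lemma rowSel_apply (k : ι) (A : Matrix ι ι R) (i j : ι) :
    rowSel k A i j = if i = k then A i j else 0 := rfl

lemma colSel_add (k : ι) (A B : Matrix ι ι R) : colSel k (A + B) = colSel k A + colSel k B := by
  ext i j; by_cases h : j = k <;> simp [h]

lemma colSel_neg (k : ι) (A : Matrix ι ι R) : colSel k (-A) = -colSel k A := by
  ext i j; by_cases h : j = k <;> simp [h]

lemma colSel_sub (k : ι) (A B : Matrix ι ι R) : colSel k (A - B) = colSel k A - colSel k B := by
  ext i j; by_cases h : j = k <;> simp [h]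

lemma rowSel_sub (k : ι) (A B : Matrix ι ι R) : rowSel k (A - B) = rowSel k A - rowSel k B := by
  ext i j; by_cases h : i = k <;> simp [h]

variable [Fintype ι]

lemma mul_colSel (k : ι) (A B : Matrix ι ι R) : A * colSel k B = colSel k (A * B) := by
  ext i j; by_cases h : j = k <;> simp [h, Matrix.mul_apply]

lemma mul_rowSel (k : ι) (A B : Matrix ι ι R) : A * rowSel k B = colSel k A * B := by
  ext i j; simp [Matrix.mul_apply]

lemma Jmat_mul_Jmat (k : ι) : (Jmat k : Matrix ι ι R) * Jmat k = 1 := by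
  rw [Jmat, diagonal_mul_diagonal, ← diagonal_one]
  congr 1; ext i; split_ifs <;> simp

lemma colSel_mul_Jmat (k : ι) (X : Matrix ι ι R) : colSel k X * Jmat k = -colSel k X := by
  ext i j; by_cases hj : j = k <;> simp [Jmat, hj]

lemma Jmat_add_colSel_mul_self {k : ι} {X : Matrix ι ι R} (hX : X k k = 0) :
    (Jmat k + colSel k X) * (Jmat k + colSel k X) = 1 := by
  have hJX : Jmat k * colSel k X = colSel k X := by
    ext i j; by_cases hi : i = k <;> by_cases hj : j = k <;> simp [Jmat, hi, hj, hX]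
  have hXX : colSel k X * colSel k X = 0 := by
    ext i j; by_cases hj : j = k <;> simp [hj, Matrix.mul_apply, hX]
  rw [add_mul, mul_add, mul_add, Jmat_mul_Jmat, hJX, hXX, colSel_mul_Jmat]
  abel

lemma colSel_mul_Jmat_add_colSel (k : ι) (W : Matrix ι ι R) {X : Matrix ι ι R}
    (hX : X k k = 0) :
    colSel k W * (Jmat k + colSel k X) = -colSel k W := by
  have hWX : colSel k W * colSel k X = 0 := by
    ext i j; by_cases hj : j = k <;> simp [hj, Matrix.mul_apply, hX]
  rw [mul_add, colSel_mul_Jmat, hWX, add_zero]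

lemma colSel_mul_mul_Jmat_add_rowSel (k : ι) (W : Matrix ι ι R) {B : Matrix ι ι R}
    (hB : B k k = 0) (Y : Matrix ι ι R) :
    colSel k W * B * (Jmat k + rowSel k Y) = colSel k W * B := by
  have hBJ : rowSel k B * Jmat k = rowSel k B := by
    ext i j; by_cases hi : i = k <;> by_cases hj : j = k <;> simp [Jmat, hi, hj, hB]
  have hBY : rowSel k B * rowSel k Y = 0 := by
    ext i j; by_cases hi : i = k <;> simp [hi, Matrix.mul_apply, hB]
  have hW : colSel k W * B = colSel k W * rowSel k B := by
    ext i j; simp [Matrix.mul_apply]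
  rw [hW, Matrix.mul_assoc, mul_add, hBJ, hBY, add_zero]

end Selection

section PositivePart

variable {ι : Type} {R : Type} [CommRing R] [LinearOrder R]

@[simp] lemma matPos_apply (A : Matrix ι ι R) (i j : ι) : matPos A i j = max (A i j) 0 := rfl

lemma matPos_sub_matPos_neg [IsStrictOrderedRing R] (A : Matrix ι ι R) :
    matPos A - matPos (-A) = A := by
  ext i j; simp [max_zero_sub_max_neg_zero_eq_self]

lemma matPos_neg [IsStrictOrderedRing R] (A : Matrix ι ι R) : matPos (-A) = matPos A - A := by
  rw [← sub_sub_cancel (matPos A) (matPos (-A)), matPos_sub_matPos_neg]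

lemma emax_eq_add_matPos_sub [IsStrictOrderedRing R] (A B : Matrix ι ι R) :
    emax A B = A + matPos (B - A) := by
  ext i j
  rcases le_total (A i j) (B i j) with h | h <;> simp [emax, h]

variable [DecidableEq ι]

lemma matPos_colSel (k : ι) (A : Matrix ι ι R) : matPos (colSel k A) = colSel k (matPos A) := by
  ext i j; by_cases h : j = k <;> simp [h]

lemma colSel_matPos_of_nonneg {k : ι} {A : Matrix ι ι R} (h : ∀ i, 0 ≤ A i k) :
    colSel k (matPos A) = colSel k A := by
  ext i j; by_cases hj : j = k <;> simp [hj, h]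

lemma colSel_matPos_of_nonpos {k : ι} {A : Matrix ι ι R} (h : ∀ i, A i k ≤ 0) :
    colSel k (matPos A) = 0 := by
  ext i j; by_cases hj : j = k <;> simp [hj, h]

lemma mutate_neg [IsStrictOrderedRing R] (B : Matrix ι ι R) (k : ι) :
    mutate (-B) k = -mutate B k := by
  ext i j
  by_cases h : i = k ∨ j = k
  · simp [mutate, h]
  · have hik := max_zero_sub_max_neg_zero_eq_self (B i k)
    have hkj := max_zero_sub_max_neg_zero_eq_self (B k j)
    simp only [mutate, if_neg h, Matrix.neg_apply, neg_neg]
    linear_combination B k j * hik - B i k * hkj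

variable [Fintype ι]

lemma mutate_eq_mul {k : ι} {B : Matrix ι ι R} (hB : B k k = 0) :
    mutate B k = (Jmat k + colSel k (matPos B)) * B * (Jmat k + rowSel k (matPos (-B))) := by
  simp only [add_mul, mul_add]
  ext i j
  simp only [Matrix.add_apply, Jmat, mul_diagonal, diagonal_mul]
  by_cases hi : i = k <;> by_cases hj : j = k <;>
    simp [mutate, hi, hj, hB, Matrix.mul_apply, diagonal_apply]

end PositivePart

section SeedStep

variable {ι : Type} [Fintype ι] [DecidableEq ι]
variable {R : Type} [CommRing R] [LinearOrder R] [IsStrictOrderedRing R]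

lemma seedStep_F_eq (B0 : Matrix ι ι R) (s : SeedData ι R) (k : ι) :
    (seedStep B0 s k).F = s.F * (Jmat k + colSel k (matPos s.B)) + colSel k (matPos s.C)
      + colSel k (matPos (-(s.C + s.F * s.B))) := by
  have hdiff : colSel k (matPos (-s.C)) + s.F * colSel k (matPos (-s.B))
      - (colSel k (matPos s.C) + s.F * colSel k (matPos s.B)) = colSel k (-(s.C + s.F * s.B)) := by
    conv_rhs => rw [← matPos_sub_matPos_neg s.C, ← matPos_sub_matPos_neg s.B]
    simp only [colSel_neg, colSel_add, colSel_sub, ← mul_colSel, Matrix.mul_sub]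
    abel
  dsimp only [seedStep]
  rw [emax_eq_add_matPos_sub, hdiff, matPos_colSel, Matrix.mul_add s.F]
  abel

lemma seedStep_C_add_F_mul_B (B0 : Matrix ι ι R) (s : SeedData ι R) {k : ι} (hB : s.B k k = 0) :
    (seedStep B0 s k).C + (seedStep B0 s k).F * (seedStep B0 s k).B
      = (s.C + s.F * s.B) * (Jmat k + rowSel k (matPos (-s.B)))
        + colSel k (matPos (-(s.C + s.F * s.B))) * -s.B := by
  set Z₁ := colSel k (matPos s.C)
  set Z₂ := colSel k (matPos (-(s.C + s.F * s.B)))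
  have hp : matPos s.B k k = 0 := by simp [hB]
  have hFJ : (seedStep B0 s k).F * (Jmat k + colSel k (matPos s.B)) = s.F - Z₁ - Z₂ := by
    rw [seedStep_F_eq, add_mul, add_mul, Matrix.mul_assoc, Jmat_add_colSel_mul_self hp,
      Matrix.mul_one, colSel_mul_Jmat_add_colSel _ _ hp, colSel_mul_Jmat_add_colSel _ _ hp]
    abel
  have hFB : (seedStep B0 s k).F * (seedStep B0 s k).B
      = s.F * s.B * (Jmat k + rowSel k (matPos (-s.B))) - Z₁ * s.B - Z₂ * s.B := by
    rw [show (seedStep B0 s k).B = mutate s.B k from rfl, mutate_eq_mul hB,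
      ← Matrix.mul_assoc, ← Matrix.mul_assoc, hFJ, Matrix.sub_mul, Matrix.sub_mul,
      Matrix.sub_mul, Matrix.sub_mul, colSel_mul_mul_Jmat_add_rowSel _ _ hB,
      colSel_mul_mul_Jmat_add_rowSel _ _ hB]
  have hCP : s.C * rowSel k (matPos s.B) - s.C * rowSel k (matPos (-s.B))
      = Z₁ * s.B - colSel k (matPos (-s.C)) * s.B := by
    rw [← Matrix.mul_sub, ← rowSel_sub, matPos_sub_matPos_neg, mul_rowSel, ← Matrix.sub_mul,
      ← colSel_sub, matPos_sub_matPos_neg]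
  rw [hFB, show (seedStep B0 s k).C = s.C * (Jmat k + rowSel k (matPos s.B))
    + colSel k (matPos (-s.C)) * s.B from rfl]
  simp only [Matrix.mul_add, Matrix.add_mul, Matrix.mul_neg]
  rw [eq_add_of_sub_eq' hCP]
  abel

lemma seedStep_F_eq_of_colSign_C_add_F_mul_B (B0 : Matrix ι ι R) (s : SeedData ι R) {k : ι}
    {ε : R} (hε : ε = 1 ∨ ε = -1) (h : ∀ i, 0 ≤ ε * (s.C + s.F * s.B) i k) :
    (seedStep B0 s k).F
      = s.F * (Jmat k + colSel k (matPos (ε • s.B))) + colSel k (matPos (ε • s.C)) := by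
  rw [seedStep_F_eq]
  rcases hε with rfl | rfl
  · rw [colSel_matPos_of_nonpos (A := -(s.C + s.F * s.B))
      fun i => neg_nonpos.mpr (by simpa using h i), add_zero, one_smul, one_smul]
  · rw [colSel_matPos_of_nonneg (A := -(s.C + s.F * s.B)) fun i => by simpa using h i]
    simp only [neg_smul, one_smul, matPos_neg, colSel_neg, colSel_add, colSel_sub,
      Matrix.mul_add, Matrix.mul_sub, mul_colSel]
    abel

lemma seedStep_F_eq_of_colSign_C (B0 : Matrix ι ι R) (s : SeedData ι R) {k : ι}
    {ε : R} (hε : ε = 1 ∨ ε = -1) (h : ∀ i, 0 ≤ ε * s.C i k) :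
    (seedStep B0 s k).F = s.F * (Jmat k + colSel k (matPos ((-ε) • s.B)))
      + colSel k (matPos (ε • (s.C + s.F * s.B))) := by
  rw [seedStep_F_eq]
  rcases hε with rfl | rfl
  · rw [colSel_matPos_of_nonneg (A := s.C) fun i => by simpa using h i]
    simp only [neg_smul, one_smul, matPos_neg, colSel_add, colSel_sub, Matrix.mul_add,
      Matrix.mul_sub, mul_colSel]
    abel
  · rw [colSel_matPos_of_nonpos (A := s.C) fun i => by simpa using h i, add_zero, neg_neg,
      one_smul, neg_smul, one_smul]

end SeedStep

section Paths

variable {ι : Type} [Fintype ι] [DecidableEq ι] {R : Type} [CommRing R] [LinearOrder R]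

lemma seedOf_append_singleton (B : Matrix ι ι R) (p : List ι) (k : ι) :
    seedOf B (p ++ [k]) = seedStep B (seedOf B p) k := by
  simp [seedOf, List.foldl_append]

lemma Cmat_append_singleton (B : Matrix ι ι R) (p : List ι) (k : ι) :
    Cmat B (p ++ [k]) = Cmat B p * (Jmat k + rowSel k (matPos (Bpath B p)))
      + colSel k (matPos (-Cmat B p)) * Bpath B p := by
  rw [Cmat, seedOf_append_singleton]; rfl

lemma Bpath_append_singleton (B : Matrix ι ι R) (p : List ι) (k : ι) :
    Bpath B (p ++ [k]) = mutate (Bpath B p) k := by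
  rw [Bpath, seedOf_append_singleton]; rfl

variable [IsStrictOrderedRing R]

lemma Bpath_neg (B : Matrix ι ι R) (p : List ι) : Bpath (-B) p = -Bpath B p := by
  induction p using List.reverseRecOn with
  | nil => rfl
  | append_singleton p k ih =>
    rw [Bpath_append_singleton, Bpath_append_singleton, ih, mutate_neg]

lemma Cmat_neg {B : Matrix ι ι R} (hdiag : ∀ p k, Bpath B p k k = 0) (p : List ι) :
    Cmat (-B) p = Cmat B p + Fmat B p * Bpath B p := by
  induction p using List.reverseRecOn with
  | nil => simp [Cmat, Fmat, Bpath, seedOf]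
  | append_singleton p k ih =>
    have step := seedStep_C_add_F_mul_B B (seedOf B p) (hdiag p k)
    rw [← seedOf_append_singleton] at step
    rw [Cmat_append_singleton, ih, Bpath_neg]
    exact step.symm

end Paths

section SkewSymmetrizable

variable {ι : Type} [Fintype ι] [DecidableEq ι]

lemma isSkewSymmetrizable_iff (B : Matrix ι ι ℤ) :
    IsSkewSymmetrizable B ↔
      ∃ d : ι → ℤ, (∀ i, 0 < d i) ∧ ∀ i j, d i * B i j = -(d j * B j i) := by
  refine exists_congr fun d => and_congr_right fun _ => ?_
  rw [← Matrix.ext_iff, forall_comm]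
  refine forall₂_congr fun i j => ?_
  simp only [transpose_apply, neg_apply, diagonal_mul]

lemma IsSkewSymmetrizable.apply_self {B : Matrix ι ι ℤ} (hB : IsSkewSymmetrizable B)
    (i : ι) : B i i = 0 := by
  obtain ⟨d, hd, h⟩ := (isSkewSymmetrizable_iff B).mp hB
  have hii := h i i
  exact (mul_eq_zero.mp (by linarith : d i * B i i = 0)).resolve_left (hd i).ne'

lemma IsSkewSymmetrizable.mutate {B : Matrix ι ι ℤ} (hB : IsSkewSymmetrizable B) (k : ι) :
    IsSkewSymmetrizable (mutate B k) := by
  rw [isSkewSymmetrizable_iff] at hB ⊢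
  obtain ⟨d, hd, h⟩ := hB
  refine ⟨d, hd, fun i j => ?_⟩
  by_cases hk : i = k ∨ j = k
  · simp only [_root_.mutate, if_pos hk, if_pos hk.symm, mul_neg, h i j]
  simp only [_root_.mutate, if_neg hk, if_neg (mt Or.symm hk)]
  refine mul_left_cancel₀ (hd k).ne' ?_
  have pos_mul : ∀ {t : ℤ} (x : ℤ), 0 < t → t * max x 0 = max (t * x) 0 := fun x ht => by
    rw [mul_max_of_nonneg _ _ ht.le, mul_zero]
  -- after scaling by `d k`, both sides are expressions in `d k * B k i`, `d j * B j k`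
  -- and their positive parts
  have e₁ : d i * max (B i k) 0 = max (-(d k * B k i)) 0 := by rw [pos_mul _ (hd i), h i k]
  have e₂ : d k * max (-B k j) 0 = max (d j * B j k) 0 := by
    rw [pos_mul _ (hd k), mul_neg, h k j, neg_neg]
  have e₃ : d j * max (B j k) 0 = max (d j * B j k) 0 := pos_mul _ (hd j)
  have e₄ : d k * max (-B k i) 0 = max (-(d k * B k i)) 0 := by rw [pos_mul _ (hd k), mul_neg]
  linear_combination d k * h i j + d k * B k j * e₁ + d i * B i k * e₂ + d k * B k i * e₃
    + d j * B j k * e₄ + max (-(d k * B k i)) 0 * h k j + max (d j * B j k) 0 * h i k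

lemma IsSkewSymmetrizable.Bpath {B : Matrix ι ι ℤ} (hB : IsSkewSymmetrizable B)
    (p : List ι) : IsSkewSymmetrizable (Bpath B p) := by
  induction p using List.reverseRecOn with
  | nil => exact hB
  | append_singleton p k ih => rw [Bpath_append_singleton]; exact ih.mutate k

end SkewSymmetrizable

/-- reduced final-seed mutation of the `F`-matrix, using the tropical signs
`ε₁ = ε_{•ℓ}(C^{B;t_0}_t)` and `ε₂ = ε_{•ℓ}(C^{-B;t_0}_t)`. -/
theorem Fmat_finalSeedMutation_reduced {n : ℕ} (B : Matrix (Fin n) (Fin n) ℤ)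
    (hB : IsSkewSymmetrizable B) (p : List (Fin n)) (ℓ : Fin n) (ε₁ ε₂ : ℤ)
    (h₁ : IsColSign ε₁ (Cmat B p) ℓ) (h₂ : IsColSign ε₂ (Cmat (-B) p) ℓ) :
    Fmat B (p ++ [ℓ]) =
        Fmat B p * (Jmat ℓ + colSel ℓ (matPos (ε₂ • Bpath B p)))
          + colSel ℓ (matPos (ε₂ • Cmat B p)) ∧
      Fmat B (p ++ [ℓ]) =
        Fmat B p * (Jmat ℓ + colSel ℓ (matPos ((-ε₁) • Bpath B p)))
          + colSel ℓ (matPos (ε₁ • Cmat (-B) p)) := by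
  have hC : Cmat (-B) p = Cmat B p + Fmat B p * Bpath B p :=
    Cmat_neg (fun q k => (hB.Bpath q).apply_self k) p
  rw [hC] at h₂ ⊢
  rw [Fmat, seedOf_append_singleton]
  exact ⟨seedStep_F_eq_of_colSign_C_add_F_mul_B B _ h₂.1 h₂.2.2,
    seedStep_F_eq_of_colSign_C B _ h₁.1 h₁.2.2⟩
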